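/- Let μ > 0, let u : [0,∞) × 𝕋² → ℝ² be a bounded (‖u‖_{L^∞} < ∞) vector field on the two-dimensional torus, and let ρ be a smooth solution of ∂_t ρ + u·∇ρ = μΔρ on 𝕋² with initial data ρ₀ not identically zero. Then ρ(t,·) is never identically zero, and there exists a constant C > 0, depending only on μ, ‖u‖_{L^∞}, and ρ₀, such that ‖∇ρ(t,·)‖_{L²(𝕋²)} / ‖ρ(t,·)‖_{L²(𝕋²)} ≤ C e^{Ct} for all t ≥ 0; that is, the ratio of the H¹ seminorm to the L² norm grows at most exponentially in time. -/

import Mathlib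

open Real MeasureTheory intervalIntegral

noncomputable section

/-- Squared `L²` norm on the torus `𝕋² = [−π,π]²` of a periodic function. -/
def l2NormSq (f : ℝ → ℝ → ℝ) : ℝ :=
  ∫ x in (-π)..π, ∫ y in (-π)..π, (f x y) ^ 2

/-- `L²` norm on the torus `𝕋² = [−π,π]²`. -/
def l2Norm (f : ℝ → ℝ → ℝ) : ℝ := Real.sqrt (l2NormSq f)

/-- Squared `L²` norm of the gradient: `‖∇ρ‖²_{L²} = ∫_{𝕋²} ((∂_x ρ)² + (∂_y ρ)²)`. -/
def gradL2NormSq (f : ℝ → ℝ → ℝ) : ℝ :=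
  ∫ x in (-π)..π, ∫ y in (-π)..π,
    ((deriv (fun x' => f x' y) x) ^ 2 + (deriv (fun y' => f x y') y) ^ 2)

/-- `L²` norm of the gradient on `𝕋²`. -/
def gradL2Norm (f : ℝ → ℝ → ℝ) : ℝ := Real.sqrt (gradL2NormSq f)

namespace GR
open Real MeasureTheory intervalIntegral Function Set Metric

lemma pi_le : (-π:ℝ) ≤ π := by linarith [Real.pi_pos]

/-! ### directional derivatives -/

def pd (v : ℝ × ℝ × ℝ) (F : ℝ × ℝ × ℝ → ℝ) : ℝ × ℝ × ℝ → ℝ := fun p => fderiv ℝ F p v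

variable {F : ℝ × ℝ × ℝ → ℝ}

lemma pd_contDiff (v : ℝ × ℝ × ℝ) (hF : ContDiff ℝ (⊤ : ℕ∞) F) : ContDiff ℝ (⊤ : ℕ∞) (pd v F) :=
  (hF.fderiv_right (by simp)).clm_apply contDiff_const

lemma hasDerivAt_sect_x (hF : ContDiff ℝ (⊤ : ℕ∞) F) (t x y : ℝ) :
    HasDerivAt (fun x' => F (t, x', y)) (pd (0,1,0) F (t,x,y)) x := by
  have h1 : HasDerivAt (fun x' : ℝ => ((t, x', y) : ℝ × ℝ × ℝ)) ((0:ℝ),(1:ℝ),(0:ℝ)) x :=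
    (hasDerivAt_const x t).prodMk ((hasDerivAt_id x).prodMk (hasDerivAt_const x y))
  exact ((hF.differentiable (by simp) (t,x,y)).hasFDerivAt.comp_hasDerivAt x h1)

lemma hasDerivAt_sect_y (hF : ContDiff ℝ (⊤ : ℕ∞) F) (t x y : ℝ) :
    HasDerivAt (fun y' => F (t, x, y')) (pd (0,0,1) F (t,x,y)) y := by
  have h1 : HasDerivAt (fun y' : ℝ => ((t, x, y') : ℝ × ℝ × ℝ)) ((0:ℝ),(0:ℝ),(1:ℝ)) y :=
    (hasDerivAt_const y t).prodMk ((hasDerivAt_const y x).prodMk (hasDerivAt_id y))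
  exact ((hF.differentiable (by simp) (t,x,y)).hasFDerivAt.comp_hasDerivAt y h1)

lemma hasDerivAt_sect_t (hF : ContDiff ℝ (⊤ : ℕ∞) F) (t x y : ℝ) :
    HasDerivAt (fun t' => F (t', x, y)) (pd (1,0,0) F (t,x,y)) t := by
  have h1 : HasDerivAt (fun t' : ℝ => ((t', x, y) : ℝ × ℝ × ℝ)) ((1:ℝ),(0:ℝ),(0:ℝ)) t :=
    (hasDerivAt_id t).prodMk ((hasDerivAt_const t x).prodMk (hasDerivAt_const t y))
  exact ((hF.differentiable (by simp) (t,x,y)).hasFDerivAt.comp_hasDerivAt t h1)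

lemma deriv_sect_x (hF : ContDiff ℝ (⊤ : ℕ∞) F) (t x y : ℝ) :
    deriv (fun x' => F (t, x', y)) x = pd (0,1,0) F (t,x,y) :=
  (hasDerivAt_sect_x hF t x y).deriv

lemma deriv_sect_y (hF : ContDiff ℝ (⊤ : ℕ∞) F) (t x y : ℝ) :
    deriv (fun y' => F (t, x, y')) y = pd (0,0,1) F (t,x,y) :=
  (hasDerivAt_sect_y hF t x y).deriv

lemma deriv_sect_t (hF : ContDiff ℝ (⊤ : ℕ∞) F) (t x y : ℝ) :
    deriv (fun t' => F (t', x, y)) t = pd (1,0,0) F (t,x,y) :=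
  (hasDerivAt_sect_t hF t x y).deriv

lemma iteratedDeriv_two_sect_x (hF : ContDiff ℝ (⊤ : ℕ∞) F) (t x y : ℝ) :
    iteratedDeriv 2 (fun x' => F (t, x', y)) x = pd (0,1,0) (pd (0,1,0) F) (t,x,y) := by
  rw [iteratedDeriv_succ, iteratedDeriv_one]
  have h : deriv (fun x' => F (t, x', y)) = fun x' => pd (0,1,0) F (t, x', y) := by
    funext x'; exact deriv_sect_x hF t x' y
  rw [h]
  exact (hasDerivAt_sect_x (pd_contDiff _ hF) t x y).deriv

lemma iteratedDeriv_two_sect_y (hF : ContDiff ℝ (⊤ : ℕ∞) F) (t x y : ℝ) :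
    iteratedDeriv 2 (fun y' => F (t, x, y')) y = pd (0,0,1) (pd (0,0,1) F) (t,x,y) := by
  rw [iteratedDeriv_succ, iteratedDeriv_one]
  have h : deriv (fun y' => F (t, x, y')) = fun y' => pd (0,0,1) F (t, x, y') := by
    funext y'; exact deriv_sect_y hF t x y'
  rw [h]
  exact (hasDerivAt_sect_y (pd_contDiff _ hF) t x y).deriv

lemma hasFDerivAt_pd (hF : ContDiff ℝ (⊤ : ℕ∞) F) (w : ℝ × ℝ × ℝ) (p : ℝ × ℝ × ℝ) :
    HasFDerivAt (pd w F) ((fderiv ℝ (fderiv ℝ F) p).flip w) p := by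
  have hd2 : HasFDerivAt (fderiv ℝ F) (fderiv ℝ (fderiv ℝ F) p) p :=
    ((hF.fderiv_right (m := (⊤ : ℕ∞)) (by simp)).differentiable (by simp) p).hasFDerivAt
  have := hd2.clm_apply (hasFDerivAt_const w p)
  simp [ContinuousLinearMap.comp_zero] at this
  exact this

lemma pd_comm (hF : ContDiff ℝ (⊤ : ℕ∞) F) (v w : ℝ × ℝ × ℝ) (p : ℝ × ℝ × ℝ) :
    pd v (pd w F) p = pd w (pd v F) p := by
  have hd : ∀ q, HasFDerivAt F (fderiv ℝ F q) q := fun q =>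
    (hF.differentiable (by simp) q).hasFDerivAt
  have hd2 : HasFDerivAt (fderiv ℝ F) (fderiv ℝ (fderiv ℝ F) p) p :=
    ((hF.fderiv_right (m := (⊤ : ℕ∞)) (by simp)).differentiable (by simp) p).hasFDerivAt
  have hsymm := second_derivative_symmetric hd hd2 v w
  have h1 : pd v (pd w F) p = (fderiv ℝ (fderiv ℝ F) p v) w := by
    have := (hasFDerivAt_pd hF w p).fderiv
    show fderiv ℝ (pd w F) p v = _
    rw [this]; rfl
  have h2 : pd w (pd v F) p = (fderiv ℝ (fderiv ℝ F) p w) v := by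
    have := (hasFDerivAt_pd hF v p).fderiv
    show fderiv ℝ (pd v F) p w = _
    rw [this]; rfl
  rw [h1, h2, hsymm]

/-- translation invariance is inherited by directional derivatives -/
lemma pd_per (hF : ContDiff ℝ (⊤ : ℕ∞) F) (c : ℝ × ℝ × ℝ) (hp : ∀ p, F (p + c) = F p)
    (v : ℝ × ℝ × ℝ) : ∀ p, pd v F (p + c) = pd v F p := by
  intro p
  have h1 : (fun q : ℝ × ℝ × ℝ => F (q + c)) = F := funext hp
  have h2 : HasFDerivAt (fun q : ℝ × ℝ × ℝ => F (q + c)) (fderiv ℝ F (p + c)) p := by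
    have h3 : HasFDerivAt (fun q : ℝ × ℝ × ℝ => q + c)
        (ContinuousLinearMap.id ℝ (ℝ × ℝ × ℝ)) p := (hasFDerivAt_id p).add_const c
    have := ((hF.differentiable (by simp) (p+c)).hasFDerivAt).comp p h3
    exact this
  rw [h1] at h2
  show fderiv ℝ F (p+c) v = fderiv ℝ F p v
  rw [h2.fderiv]

/-! ### double integrals -/

def I2 (h : ℝ → ℝ → ℝ) : ℝ := ∫ x in (-π)..π, ∫ y in (-π)..π, h x y

lemma cont_inner {h : ℝ → ℝ → ℝ} (hh : Continuous (uncurry h)) :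
    Continuous fun x => ∫ y in (-π)..π, h x y :=
  intervalIntegral.continuous_parametric_intervalIntegral_of_continuous' hh _ _

lemma intInt_inner {h : ℝ → ℝ → ℝ} (hh : Continuous (uncurry h)) (x : ℝ) :
    IntervalIntegrable (fun y => h x y) volume (-π) π :=
  (hh.comp (Continuous.prodMk_right x)).intervalIntegrable _ _

lemma I2_add {f g : ℝ → ℝ → ℝ} (hf : Continuous (uncurry f)) (hg : Continuous (uncurry g)) :
    I2 (fun x y => f x y + g x y) = I2 f + I2 g := by
  unfold I2
  rw [← intervalIntegral.integral_add ((cont_inner hf).intervalIntegrable _ _)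
    ((cont_inner hg).intervalIntegrable _ _)]
  apply intervalIntegral.integral_congr
  intro x _
  exact intervalIntegral.integral_add (intInt_inner hf x) (intInt_inner hg x)

lemma I2_const_mul (c : ℝ) (f : ℝ → ℝ → ℝ) :
    I2 (fun x y => c * f x y) = c * I2 f := by
  unfold I2
  simp_rw [intervalIntegral.integral_const_mul]

lemma I2_nonneg {h : ℝ → ℝ → ℝ} (h0 : ∀ x y, 0 ≤ h x y) : 0 ≤ I2 h := by
  apply intervalIntegral.integral_nonneg pi_le
  intro x _
  exact intervalIntegral.integral_nonneg pi_le (fun y _ => h0 x y)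

lemma I2_mono {f g : ℝ → ℝ → ℝ} (hf : Continuous (uncurry f)) (hg : Continuous (uncurry g))
    (hle : ∀ x y, f x y ≤ g x y) : I2 f ≤ I2 g := by
  have h : I2 (fun x y => g x y - f x y) = I2 g - I2 f := by
    have := I2_add (f := fun x y => g x y - f x y) (g := f) (by fun_prop) hf
    simp at this
    linarith
  have h0 : 0 ≤ I2 (fun x y => g x y - f x y) :=
    I2_nonneg (fun x y => by linarith [hle x y])
  linarith

lemma I2_abs_le {h : ℝ → ℝ → ℝ} (hh : Continuous (uncurry h)) :
    |I2 h| ≤ I2 (fun x y => |h x y|) := by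
  have h1 : I2 h ≤ I2 (fun x y => |h x y|) :=
    I2_mono hh (by fun_prop) (fun x y => le_abs_self _)
  have h2 : I2 (fun x y => -(h x y)) = -I2 h := by
    have := I2_const_mul (-1) h; simp at this ⊢; linarith [this]
  have h3 : I2 (fun x y => -h x y) ≤ I2 (fun x y => |h x y|) :=
    I2_mono (by fun_prop) (by fun_prop) (fun x y => neg_le_abs _)
  rw [abs_le]; constructor <;> [skip; exact h1]
  rw [h2] at h3; linarith

lemma I2_swap {h : ℝ → ℝ → ℝ} (hh : Continuous (uncurry h)) :
    I2 h = ∫ y in (-π)..π, ∫ x in (-π)..π, h x y := by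
  unfold I2
  have hle := pi_le
  rw [intervalIntegral.integral_of_le hle, intervalIntegral.integral_of_le hle]
  simp_rw [intervalIntegral.integral_of_le hle]
  have hint1 : IntegrableOn (uncurry h) (Ioc (-π) π ×ˢ Ioc (-π) π) (volume.prod volume) := by
    apply IntegrableOn.mono_set (t := Icc (-π) π ×ˢ Icc (-π) π)
    · exact hh.continuousOn.integrableOn_compact (IsCompact.prod isCompact_Icc isCompact_Icc)
    · exact Set.prod_mono Ioc_subset_Icc_self Ioc_subset_Icc_self
  have h2 : Integrable (uncurry h)
      ((volume.restrict (Ioc (-π) π)).prod (volume.restrict (Ioc (-π) π))) := by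
    rw [Measure.prod_restrict]; exact hint1
  exact MeasureTheory.integral_integral_swap h2

lemma I2_zero : I2 (fun _ _ => (0:ℝ)) = 0 := by
  unfold I2; simp

lemma I2_sq_nonneg (h : ℝ → ℝ → ℝ) : 0 ≤ I2 (fun x y => (h x y)^2) :=
  I2_nonneg (fun x y => sq_nonneg _)

lemma I2_cauchy_schwarz {f g : ℝ → ℝ → ℝ} (hf : Continuous (uncurry f))
    (hg : Continuous (uncurry g)) :
    (I2 (fun x y => f x y * g x y))^2 ≤ I2 (fun x y => (f x y)^2) * I2 (fun x y => (g x y)^2) := by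
  set A := I2 (fun x y => (g x y)^2)
  set B := I2 (fun x y => f x y * g x y)
  set C := I2 (fun x y => (f x y)^2)
  have key : ∀ l : ℝ, 0 ≤ A * (l * l) + (2*B) * l + C := by
    intro l
    have expand : ∀ x y, (l * g x y + f x y)^2
        = l*l*(g x y)^2 + 2*l*(f x y * g x y) + (f x y)^2 := by intro x y; ring
    have h0 : 0 ≤ I2 (fun x y => (l * g x y + f x y)^2) := I2_sq_nonneg _
    have hlin : I2 (fun x y => (l * g x y + f x y)^2) = l*l*A + 2*l*B + C := by
      calc I2 (fun x y => (l * g x y + f x y)^2)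
          = I2 (fun x y => l*l*(g x y)^2 + 2*l*(f x y * g x y) + (f x y)^2) := by
            simp_rw [expand]
        _ = I2 (fun x y => l*l*(g x y)^2 + 2*l*(f x y * g x y)) + C := by
            apply I2_add (by fun_prop) (by fun_prop)
        _ = I2 (fun x y => l*l*(g x y)^2) + I2 (fun x y => 2*l*(f x y * g x y)) + C := by
            rw [I2_add (by fun_prop) (by fun_prop)]
        _ = l*l*A + 2*l*B + C := by rw [I2_const_mul, I2_const_mul]
    nlinarith [h0, hlin]
  have := discrim_le_zero key
  rw [discrim] at this
  nlinarith

lemma I2_cs_sqrt {f g : ℝ → ℝ → ℝ} (hf : Continuous (uncurry f)) (hg : Continuous (uncurry g)) :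
    I2 (fun x y => f x y * g x y)
      ≤ Real.sqrt (I2 (fun x y => (f x y)^2)) * Real.sqrt (I2 (fun x y => (g x y)^2)) := by
  have h1 := I2_cauchy_schwarz hf hg
  calc I2 (fun x y => f x y * g x y) ≤ |I2 (fun x y => f x y * g x y)| := le_abs_self _
    _ = Real.sqrt ((I2 (fun x y => f x y * g x y))^2) := (Real.sqrt_sq_eq_abs _).symm
    _ ≤ Real.sqrt (I2 (fun x y => (f x y)^2) * I2 (fun x y => (g x y)^2)) :=
        Real.sqrt_le_sqrt h1
    _ = _ := Real.sqrt_mul (I2_sq_nonneg f) _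

/-! ### differentiation under the double integral -/

lemma hasDerivAt_I2 (H H' : ℝ → ℝ → ℝ → ℝ)
    (hH : Continuous fun p : ℝ × ℝ × ℝ => H p.1 p.2.1 p.2.2)
    (hH' : Continuous fun p : ℝ × ℝ × ℝ => H' p.1 p.2.1 p.2.2)
    (hd : ∀ t x y, HasDerivAt (fun s => H s x y) (H' t x y) t) (t₀ : ℝ) :
    HasDerivAt (fun t => I2 (H t)) (I2 (H' t₀)) t₀ := by
  have step1 : ∀ s x : ℝ, HasDerivAt (fun t => ∫ y in (-π)..π, H t x y)
      (∫ y in (-π)..π, H' s x y) s := by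
    intro s x
    obtain ⟨C, hC⟩ : ∃ C, ∀ p ∈ Icc (s-1) (s+1) ×ˢ Icc (x-1) (x+1) ×ˢ Icc (-π) π,
        ‖(fun p : ℝ × ℝ × ℝ => H' p.1 p.2.1 p.2.2) p‖ ≤ C :=
      ((isCompact_Icc.prod (isCompact_Icc.prod isCompact_Icc))).exists_bound_of_continuousOn
        hH'.continuousOn
    have key := intervalIntegral.hasDerivAt_integral_of_dominated_loc_of_deriv_le
      (F := fun t y => H t x y) (F' := fun t y => H' t x y) (x₀ := s)
      (a := -π) (b := π) (s := Metric.ball s 1) (bound := fun _ => C) (μ := volume)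
      (Metric.ball_mem_nhds _ one_pos)
      (Filter.Eventually.of_forall fun t =>
        ((hH.comp (by fun_prop : Continuous fun y : ℝ => (t, x, y))).aestronglyMeasurable))
      ((hH.comp (by fun_prop : Continuous fun y : ℝ => (s, x, y))).intervalIntegrable _ _)
      ((hH'.comp (by fun_prop : Continuous fun y : ℝ => (s, x, y))).aestronglyMeasurable)
      (Filter.Eventually.of_forall fun y hy t ht => by
        have ht' : t ∈ Icc (s-1) (s+1) := by
          have := mem_ball_iff_norm.mp ht
          simp only [Real.norm_eq_abs] at this
          constructor <;> [linarith [abs_le.mp this.le] ; linarith [(abs_le.mp this.le).2]]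
        have hy' : y ∈ Icc (-π) π := by
          have h2 : y ∈ Ioc (-π) π := by
            rwa [Set.uIoc_of_le (by linarith [Real.pi_pos] : (-π:ℝ) ≤ π)] at hy
          exact Ioc_subset_Icc_self h2
        exact hC (t, x, y) ⟨ht', ⟨⟨by linarith, by linarith⟩, hy'⟩⟩)
      (intervalIntegrable_const)
      (Filter.Eventually.of_forall fun y _ t _ => hd t x y)
    exact key.2
  obtain ⟨C, hC⟩ : ∃ C, ∀ p ∈ Icc (t₀-1) (t₀+1) ×ˢ Icc (-π) π ×ˢ Icc (-π) π,
      ‖(fun p : ℝ × ℝ × ℝ => H' p.1 p.2.1 p.2.2) p‖ ≤ C :=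
    ((isCompact_Icc.prod (isCompact_Icc.prod isCompact_Icc))).exists_bound_of_continuousOn
      hH'.continuousOn
  have key := intervalIntegral.hasDerivAt_integral_of_dominated_loc_of_deriv_le
    (F := fun t x => ∫ y in (-π)..π, H t x y) (F' := fun t x => ∫ y in (-π)..π, H' t x y)
    (x₀ := t₀) (a := -π) (b := π) (s := Metric.ball t₀ 1) (bound := fun _ => C * |π - (-π)|) (μ := volume)
    (Metric.ball_mem_nhds _ one_pos)
    (Filter.Eventually.of_forall fun t =>
      (intervalIntegral.continuous_parametric_intervalIntegral_of_continuous'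
        (f := fun x y => H t x y) (by fun_prop) _ _).aestronglyMeasurable)
    ((intervalIntegral.continuous_parametric_intervalIntegral_of_continuous'
        (f := fun x y => H t₀ x y) (by fun_prop) _ _).intervalIntegrable _ _)
    ((intervalIntegral.continuous_parametric_intervalIntegral_of_continuous'
        (f := fun x y => H' t₀ x y) (by fun_prop) _ _).aestronglyMeasurable)
    (Filter.Eventually.of_forall fun x hx t ht => by
      apply intervalIntegral.norm_integral_le_of_norm_le_const
      intro y hy
      have ht' : t ∈ Icc (t₀-1) (t₀+1) := by
        have := mem_ball_iff_norm.mp ht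
        simp only [Real.norm_eq_abs] at this
        constructor <;> [linarith [abs_le.mp this.le] ; linarith [(abs_le.mp this.le).2]]
      have hy' : y ∈ Icc (-π) π := by
        have h2 : y ∈ Ioc (-π) π := by
          rwa [Set.uIoc_of_le (by linarith [Real.pi_pos] : (-π:ℝ) ≤ π)] at hy
        exact Ioc_subset_Icc_self h2
      have hx' : x ∈ Icc (-π) π := by
        have h2 : x ∈ Ioc (-π) π := by
          rwa [Set.uIoc_of_le (by linarith [Real.pi_pos] : (-π:ℝ) ≤ π)] at hx
        exact Ioc_subset_Icc_self h2
      exact hC (t, x, y) ⟨ht', hx', hy'⟩)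
    (intervalIntegrable_const)
    (Filter.Eventually.of_forall fun x _ t _ => step1 t x)
  exact key.2

/-! ### integration by parts, Gronwall, positivity -/

lemma ibp_per {f g f' g' : ℝ → ℝ}
    (hf : ∀ x, HasDerivAt f (f' x) x) (hg : ∀ x, HasDerivAt g (g' x) x)
    (hf' : Continuous f') (hg' : Continuous g')
    (hper : f π * g π = f (-π) * g (-π)) :
    ∫ x in (-π)..π, f' x * g x = - ∫ x in (-π)..π, f x * g' x := by
  have hfc : Continuous f := by
    rw [continuous_iff_continuousAt]; exact fun x => (hf x).continuousAt
  have hgc : Continuous g := by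
    rw [continuous_iff_continuousAt]; exact fun x => (hg x).continuousAt
  have key := intervalIntegral.integral_deriv_mul_eq_sub_of_hasDerivAt
    (a := -π) (b := π) (u := f) (v := g) (u' := f') (v' := g')
    hfc.continuousOn hgc.continuousOn
    (fun x _ => hf x) (fun x _ => hg x)
    (hf'.intervalIntegrable _ _) (hg'.intervalIntegrable _ _)
  have hadd : ∫ x in (-π)..π, (f' x * g x + f x * g' x)
      = (∫ x in (-π)..π, f' x * g x) + ∫ x in (-π)..π, f x * g' x :=
    intervalIntegral.integral_add ((hf'.mul hgc).intervalIntegrable _ _)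
      ((hfc.mul hg').intervalIntegrable _ _)
  rw [hadd, hper] at key
  linarith

lemma gron_le {f f' : ℝ → ℝ} {K a b : ℝ} (hab : a ≤ b)
    (hf : ∀ t ∈ Icc a b, HasDerivAt f (f' t) t)
    (hle : ∀ t ∈ Icc a b, f' t ≤ K * f t) :
    ∀ t ∈ Icc a b, f t ≤ f a * Real.exp (K * (t - a)) := by
  intro t ht
  have hgd : ∀ s ∈ Icc a b, HasDerivAt (fun s => f s * Real.exp (-K * s))
      (f' s * Real.exp (-K * s) + f s * (Real.exp (-K * s) * -K)) s := by
    intro s hs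
    have hexp : HasDerivAt (fun s : ℝ => Real.exp (-K * s)) (Real.exp (-K*s) * -K) s := by
      have h := ((hasDerivAt_id s).const_mul (-K)).exp
      simpa using h
    exact (hf s hs).mul hexp
  have hanti : AntitoneOn (fun s => f s * Real.exp (-K * s)) (Icc a b) := by
    apply antitoneOn_of_deriv_nonpos (convex_Icc a b)
    · exact fun s hs => (hgd s hs).continuousAt.continuousWithinAt
    · intro s hs
      rw [interior_Icc] at hs
      exact (hgd s (Ioo_subset_Icc_self hs)).differentiableAt.differentiableWithinAt
    · intro s hs
      rw [interior_Icc] at hs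
      rw [(hgd s (Ioo_subset_Icc_self hs)).deriv]
      have h1 : f' s ≤ K * f s := hle s (Ioo_subset_Icc_self hs)
      have h2 : (0:ℝ) < Real.exp (-K * s) := Real.exp_pos _
      nlinarith
  have hm := hanti (left_mem_Icc.mpr hab) ht ht.1
  simp only at hm
  have e1 : Real.exp (-K*t) * Real.exp (K*t) = 1 := by
    rw [← Real.exp_add]; ring_nf; exact Real.exp_zero
  calc f t = f t * Real.exp (-K*t) * Real.exp (K*t) := by rw [mul_assoc, e1, mul_one]
    _ ≤ f a * Real.exp (-K*a) * Real.exp (K*t) :=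
        mul_le_mul_of_nonneg_right hm (Real.exp_pos _).le
    _ = f a * Real.exp (K*(t-a)) := by rw [mul_assoc, ← Real.exp_add]; ring_nf

lemma gron_ge {f f' : ℝ → ℝ} {c a b : ℝ} (hab : a ≤ b)
    (hf : ∀ t ∈ Icc a b, HasDerivAt f (f' t) t)
    (hge : ∀ t ∈ Ioo a b, -c * f t ≤ f' t) :
    f a * Real.exp (-c * (b - a)) ≤ f b := by
  have hgd : ∀ s ∈ Icc a b, HasDerivAt (fun s => f s * Real.exp (c * s))
      (f' s * Real.exp (c * s) + f s * (Real.exp (c * s) * c)) s := by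
    intro s hs
    have hexp : HasDerivAt (fun s : ℝ => Real.exp (c * s)) (Real.exp (c*s) * c) s := by
      have h := ((hasDerivAt_id s).const_mul c).exp
      simpa using h
    exact (hf s hs).mul hexp
  have hmono : MonotoneOn (fun s => f s * Real.exp (c * s)) (Icc a b) := by
    apply monotoneOn_of_deriv_nonneg (convex_Icc a b)
    · exact fun s hs => (hgd s hs).continuousAt.continuousWithinAt
    · intro s hs
      rw [interior_Icc] at hs
      exact (hgd s (Ioo_subset_Icc_self hs)).differentiableAt.differentiableWithinAt
    · intro s hs
      rw [interior_Icc] at hs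
      rw [(hgd s (Ioo_subset_Icc_self hs)).deriv]
      have h1 := hge s hs
      have h2 : (0:ℝ) < Real.exp (c * s) := Real.exp_pos _
      nlinarith
  have hm := hmono (left_mem_Icc.mpr hab) (right_mem_Icc.mpr hab) hab
  simp only at hm
  have e3 : Real.exp (c*a) * Real.exp (-(c*b)) = Real.exp (-c*(b-a)) := by
    rw [← Real.exp_add]; congr 1; ring
  calc f a * Real.exp (-c*(b-a)) = f a * Real.exp (c*a) * Real.exp (-(c*b)) := by
        rw [mul_assoc, e3]
    _ ≤ f b * Real.exp (c*b) * Real.exp (-(c*b)) :=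
        mul_le_mul_of_nonneg_right hm (Real.exp_pos _).le
    _ = f b := by rw [mul_assoc, ← Real.exp_add]; simp

lemma integral_pos_of_pos_at {k : ℝ → ℝ} (hk : Continuous k) (h0 : ∀ x, 0 ≤ k x)
    {x₀ : ℝ} (hx₀ : x₀ ∈ Ioo (-π) π) (hpos : 0 < k x₀) :
    0 < ∫ x in (-π)..π, k x := by
  rw [intervalIntegral.integral_of_le pi_le]
  have hint : IntegrableOn k (Ioc (-π) π) volume :=
    (hk.continuousOn.integrableOn_compact isCompact_Icc).mono_set Ioc_subset_Icc_self
  rw [MeasureTheory.integral_pos_iff_support_of_nonneg h0 hint]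
  set U : Set ℝ := k ⁻¹' (Ioi 0) ∩ Ioo (-π) π with hU
  have hUopen : IsOpen U := (isOpen_Ioi.preimage hk).inter isOpen_Ioo
  have hx₀U : x₀ ∈ U := ⟨hpos, hx₀⟩
  have h1 : 0 < volume U := hUopen.measure_pos volume ⟨x₀, hx₀U⟩
  have h2 : (volume.restrict (Ioc (-π) π)) U = volume U := by
    rw [Measure.restrict_apply' measurableSet_Ioc,
      inter_eq_self_of_subset_left (fun z hz => Ioo_subset_Ioc_self hz.2)]
  calc 0 < volume U := h1
    _ = (volume.restrict (Ioc (-π) π)) U := h2.symm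
    _ ≤ (volume.restrict (Ioc (-π) π)) (support k) :=
        measure_mono (fun z hz => ne_of_gt hz.1)

lemma amgm {mu M a b G W : ℝ} (hmu : 0 < mu) (ha : a*a = W) (hb : b*b = G) :
    -(M^2/mu) * G ≤ mu * W - 2*M*a*b := by
  have h1 : 0 ≤ (mu*a - M*b)^2 := sq_nonneg _
  have h2 : mu * (mu * W - 2*M*a*b) + M^2 * G = (mu*a - M*b)^2 := by
    rw [← ha, ← hb]; ring
  have h3 : 0 ≤ mu * (mu * W - 2*M*a*b) + M^2 * G := h2 ▸ h1
  rw [neg_mul, neg_le, ← sub_nonneg]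
  have h4 : M^2/mu * G - -(mu * W - 2*M*a*b) = (mu * (mu * W - 2*M*a*b) + M^2 * G) / mu := by
    field_simp
    ring
  rw [h4]
  positivity

lemma core_final {M mu E G L I : ℝ} (hmu : 0 < mu) (hI : -(M^2/mu) * G ≤ I) (hE : 0 ≤ E)
    (hfin : L * E^2 = G * E) : -2 * E * I ≤ 2 * M^2 / mu * L * E^2 := by
  have h5 : 0 ≤ I + M^2/mu * G := by linarith
  have h6 := mul_nonneg h5 hE
  have h7 : 2 * M^2 / mu * L * E^2 = 2 * (M^2/mu) * (G * E) := by
    rw [← hfin]; ring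
  rw [h7]
  nlinarith [h6]

lemma div_mul_sq (a e : ℝ) (he : e ≠ 0) : a / e * e^2 = a * e := by
  field_simp

end GR
set_option maxHeartbeats 1000000 in
open GR Function Set in
/-- **At most exponential growth of the `H¹`/`L²` ratio.** For `μ > 0`, a bounded vector field
`u` on `𝕋²`, and a smooth, not identically zero solution of `∂_t ρ + u·∇ρ = μΔρ`, the solution
`ρ(t,·)` is never identically zero and there is `C > 0`, depending only on `μ`, `‖u‖_{L^∞}` and
`ρ(0,·)`, with `‖∇ρ(t)‖_{L²}/‖ρ(t)‖_{L²} ≤ C e^{Ct}` for all `t ≥ 0`. -/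
theorem gradient_ratio_exponential_bound
    (μ : ℝ) (hμ : 0 < μ)
    (u : ℝ → ℝ → ℝ → ℝ × ℝ) (ρ : ℝ → ℝ → ℝ → ℝ)
    (hubd : ∃ M : ℝ, ∀ t x y, ‖u t x y‖ ≤ M)
    (huperx : ∀ t x y, u t (x + 2 * π) y = u t x y)
    (hupery : ∀ t x y, u t x (y + 2 * π) = u t x y)
    (hsmooth : ContDiff ℝ (⊤ : ℕ∞) (fun p : ℝ × ℝ × ℝ => ρ p.1 p.2.1 p.2.2))
    (hperx : ∀ t x y, ρ t (x + 2 * π) y = ρ t x y)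
    (hpery : ∀ t x y, ρ t x (y + 2 * π) = ρ t x y)
    (hpde : ∀ t, 0 ≤ t → ∀ x y,
      deriv (fun s => ρ s x y) t +
          (u t x y).1 * deriv (fun x' => ρ t x' y) x +
          (u t x y).2 * deriv (fun y' => ρ t x y') y =
        μ * (iteratedDeriv 2 (fun x' => ρ t x' y) x + iteratedDeriv 2 (fun y' => ρ t x y') y))
    (hnz : ∃ x y, ρ 0 x y ≠ 0) :
    (∀ t, 0 ≤ t → ∃ x y, ρ t x y ≠ 0) ∧
    ∃ C : ℝ, 0 < C ∧ ∀ t, 0 ≤ t →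
      gradL2Norm (ρ t) / l2Norm (ρ t) ≤ C * Real.exp (C * t) := by
  classical
  obtain ⟨M₀, hM₀⟩ := hubd
  set M : ℝ := max M₀ 0 with hMdef
  have hM0 : (0:ℝ) ≤ M := le_max_right _ _
  have hMu : ∀ t x y, |(u t x y).1| ≤ M ∧ |(u t x y).2| ≤ M := by
    intro t x y
    have h1 : ‖(u t x y).1‖ ≤ ‖u t x y‖ := norm_fst_le _
    have h2 : ‖(u t x y).2‖ ≤ ‖u t x y‖ := norm_snd_le _
    have h3 := hM₀ t x y
    rw [Real.norm_eq_abs] at h1 h2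
    exact ⟨by calc |(u t x y).1| ≤ ‖u t x y‖ := h1
                _ ≤ M₀ := h3
                _ ≤ M := le_max_left _ _,
          by calc |(u t x y).2| ≤ ‖u t x y‖ := h2
                _ ≤ M₀ := h3
                _ ≤ M := le_max_left _ _⟩
  set F : ℝ × ℝ × ℝ → ℝ := fun p => ρ p.1 p.2.1 p.2.2 with hFdef
  have hF : ContDiff ℝ (⊤ : ℕ∞) F := hsmooth
  set Pt : ℝ × ℝ × ℝ → ℝ := pd (1,0,0) F with hPtdef
  set Px : ℝ × ℝ × ℝ → ℝ := pd (0,1,0) F with hPxdef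
  set Py : ℝ × ℝ × ℝ → ℝ := pd (0,0,1) F with hPydef
  set Pxx : ℝ × ℝ × ℝ → ℝ := pd (0,1,0) Px with hPxxdef
  set Pyy : ℝ × ℝ × ℝ → ℝ := pd (0,0,1) Py with hPyydef
  set Qx : ℝ × ℝ × ℝ → ℝ := pd (1,0,0) Px with hQxdef
  set Qy : ℝ × ℝ × ℝ → ℝ := pd (1,0,0) Py with hQydef
  have hFPt : ContDiff ℝ (⊤ : ℕ∞) Pt := pd_contDiff _ hF
  have hFPx : ContDiff ℝ (⊤ : ℕ∞) Px := pd_contDiff _ hF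
  have hFPy : ContDiff ℝ (⊤ : ℕ∞) Py := pd_contDiff _ hF
  have hFPxx : ContDiff ℝ (⊤ : ℕ∞) Pxx := pd_contDiff _ hFPx
  have hFPyy : ContDiff ℝ (⊤ : ℕ∞) Pyy := pd_contDiff _ hFPy
  have hFQx : ContDiff ℝ (⊤ : ℕ∞) Qx := pd_contDiff _ hFPx
  have hFQy : ContDiff ℝ (⊤ : ℕ∞) Qy := pd_contDiff _ hFPy
  have cF : Continuous F := hF.continuous
  have cPt : Continuous Pt := hFPt.continuous
  have cPx : Continuous Px := hFPx.continuous
  have cPy : Continuous Py := hFPy.continuous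
  have cPxx : Continuous Pxx := hFPxx.continuous
  have cPyy : Continuous Pyy := hFPyy.continuous
  have cQx : Continuous Qx := hFQx.continuous
  have cQy : Continuous Qy := hFQy.continuous
  -- periodicity
  set cx : ℝ × ℝ × ℝ := (0, 2*π, 0) with hcxdef
  set cy : ℝ × ℝ × ℝ := (0, 0, 2*π) with hcydef
  have hFperx : ∀ p : ℝ × ℝ × ℝ, F (p + cx) = F p := by
    rintro ⟨t, x, y⟩
    have he : ((t,x,y) : ℝ × ℝ × ℝ) + cx = (t, x + 2*π, y) := by
      simp [hcxdef, Prod.ext_iff]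
    rw [he]
    exact hperx t x y
  have hFpery : ∀ p : ℝ × ℝ × ℝ, F (p + cy) = F p := by
    rintro ⟨t, x, y⟩
    have he : ((t,x,y) : ℝ × ℝ × ℝ) + cy = (t, x, y + 2*π) := by
      simp [hcydef, Prod.ext_iff]
    rw [he]
    exact hpery t x y
  have perx_val : ∀ (k : ℝ × ℝ × ℝ → ℝ), (∀ p, k (p + cx) = k p) →
      ∀ t y, k (t, π, y) = k (t, -π, y) := by
    intro k hk t y
    have h := hk (t, -π, y)
    have he : ((t, -π, y) : ℝ × ℝ × ℝ) + cx = (t, π, y) := by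
      simp [hcxdef, Prod.ext_iff]; ring
    rw [he] at h
    exact h
  have pery_val : ∀ (k : ℝ × ℝ × ℝ → ℝ), (∀ p, k (p + cy) = k p) →
      ∀ t x, k (t, x, π) = k (t, x, -π) := by
    intro k hk t x
    have h := hk (t, x, -π)
    have he : ((t, x, -π) : ℝ × ℝ × ℝ) + cy = (t, x, π) := by
      simp [hcydef, Prod.ext_iff]; ring
    rw [he] at h
    exact h
  have hPxperx : ∀ p, Px (p + cx) = Px p := pd_per hF cx hFperx _
  have hPyperx : ∀ p, Py (p + cx) = Py p := pd_per hF cx hFperx _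
  have hPtperx : ∀ p, Pt (p + cx) = Pt p := pd_per hF cx hFperx _
  have hPxpery : ∀ p, Px (p + cy) = Px p := pd_per hF cy hFpery _
  have hPypery : ∀ p, Py (p + cy) = Py p := pd_per hF cy hFpery _
  have hPtpery : ∀ p, Pt (p + cy) = Pt p := pd_per hF cy hFpery _
  -- the energies and their derivatives
  set E : ℝ → ℝ := fun s => I2 (fun x y => F (s,x,y)^2) with hEdef
  set Gq : ℝ → ℝ := fun s => I2 (fun x y => Px (s,x,y)^2 + Py (s,x,y)^2) with hGqdef
  set E' : ℝ → ℝ := fun s => 2 * I2 (fun x y => F (s,x,y) * Pt (s,x,y)) with hE'def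
  set G' : ℝ → ℝ := fun s => 2 * I2 (fun x y => Px (s,x,y) * Qx (s,x,y) + Py (s,x,y) * Qy (s,x,y))
    with hG'def
  have hE0le : ∀ s, 0 ≤ E s := fun s => I2_sq_nonneg _
  have hGq0le : ∀ s, 0 ≤ Gq s := fun s => I2_nonneg (fun x y => by positivity)
  have hEd : ∀ s, HasDerivAt E (E' s) s := by
    intro s
    have h := hasDerivAt_I2 (fun s x y => F (s,x,y)^2)
      (fun s x y => 2*(F (s,x,y) * Pt (s,x,y)))
      (by exact cF.pow 2)
      (by exact continuous_const.mul (cF.mul cPt))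
      (fun t x y => by
        have h1 := (hasDerivAt_sect_t hF t x y).fun_pow 2
        refine h1.congr_deriv ?_
        push_cast; ring) s
    have h2 : I2 (fun x y => 2*(F (s,x,y) * Pt (s,x,y)))
        = 2 * I2 (fun x y => F (s,x,y) * Pt (s,x,y)) :=
      I2_const_mul 2 _
    rw [h2] at h
    exact h
  have hGd : ∀ s, HasDerivAt Gq (G' s) s := by
    intro s
    have h := hasDerivAt_I2 (fun s x y => Px (s,x,y)^2 + Py (s,x,y)^2)
      (fun s x y => 2*(Px (s,x,y) * Qx (s,x,y) + Py (s,x,y) * Qy (s,x,y)))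
      (by exact (cPx.pow 2).add (cPy.pow 2))
      (by exact continuous_const.mul ((cPx.mul cQx).add (cPy.mul cQy)))
      (fun t x y => by
        have h1 := ((hasDerivAt_sect_t hFPx t x y).fun_pow 2).add
          ((hasDerivAt_sect_t hFPy t x y).fun_pow 2)
        refine h1.congr_deriv ?_
        push_cast; ring) s
    have h2 : I2 (fun x y => 2*(Px (s,x,y) * Qx (s,x,y) + Py (s,x,y) * Qy (s,x,y)))
        = 2 * I2 (fun x y => Px (s,x,y) * Qx (s,x,y) + Py (s,x,y) * Qy (s,x,y)) :=
      I2_const_mul 2 _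
    rw [h2] at h
    exact h
  -- identification with the statement's norms
  have hEeq : ∀ s, l2NormSq (ρ s) = E s := fun s => rfl
  have hGeq : ∀ s, gradL2NormSq (ρ s) = Gq s := by
    intro s
    simp only [hGqdef]
    apply intervalIntegral.integral_congr
    intro x _
    apply intervalIntegral.integral_congr
    intro y _
    have h1 : deriv (fun x' => ρ s x' y) x = Px (s,x,y) := (hasDerivAt_sect_x hF s x y).deriv
    have h2 : deriv (fun y' => ρ s x y') y = Py (s,x,y) := (hasDerivAt_sect_y hF s x y).deriv
    simp only [h1, h2]
  -- the transport term
  set gs : ℝ × ℝ × ℝ → ℝ := fun p => μ * (Pxx p + Pyy p) - Pt p with hgsdef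
  have cgs : Continuous gs := ((continuous_const.mul (cPxx.add cPyy)).sub cPt)
  have hPtdecomp : ∀ p, Pt p = μ * (Pxx p + Pyy p) - gs p := by
    intro p; simp [hgsdef]
  have hgsbound : ∀ s, 0 ≤ s → ∀ x y,
      |gs (s,x,y)| ≤ M * (|Px (s,x,y)| + |Py (s,x,y)|) := by
    intro s hs x y
    have hp := hpde s hs x y
    have e1 : deriv (fun s' => ρ s' x y) s = Pt (s,x,y) := (hasDerivAt_sect_t hF s x y).deriv
    have e2 : deriv (fun x' => ρ s x' y) x = Px (s,x,y) := (hasDerivAt_sect_x hF s x y).deriv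
    have e3 : deriv (fun y' => ρ s x y') y = Py (s,x,y) := (hasDerivAt_sect_y hF s x y).deriv
    have e4 : iteratedDeriv 2 (fun x' => ρ s x' y) x = Pxx (s,x,y) :=
      iteratedDeriv_two_sect_x hF s x y
    have e5 : iteratedDeriv 2 (fun y' => ρ s x y') y = Pyy (s,x,y) :=
      iteratedDeriv_two_sect_y hF s x y
    rw [e1, e2, e3, e4, e5] at hp
    have hgseq : gs (s,x,y) = (u s x y).1 * Px (s,x,y) + (u s x y).2 * Py (s,x,y) := by
      simp only [hgsdef]
      linarith
    rw [hgseq]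
    calc |(u s x y).1 * Px (s,x,y) + (u s x y).2 * Py (s,x,y)|
        ≤ |(u s x y).1 * Px (s,x,y)| + |(u s x y).2 * Py (s,x,y)| := abs_add_le _ _
      _ = |(u s x y).1| * |Px (s,x,y)| + |(u s x y).2| * |Py (s,x,y)| := by
          rw [abs_mul, abs_mul]
      _ ≤ M * |Px (s,x,y)| + M * |Py (s,x,y)| :=
          add_le_add (mul_le_mul_of_nonneg_right (hMu s x y).1 (abs_nonneg _))
            (mul_le_mul_of_nonneg_right (hMu s x y).2 (abs_nonneg _))
      _ = M * (|Px (s,x,y)| + |Py (s,x,y)|) := by ring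
  -- integration by parts identities
  -- inner integration by parts, y-direction
  have ibp_y : ∀ (k l : ℝ × ℝ × ℝ → ℝ), ContDiff ℝ (⊤ : ℕ∞) k → ContDiff ℝ (⊤ : ℕ∞) l →
      (∀ p, k (p + cy) = k p) → (∀ p, l (p + cy) = l p) → ∀ s x,
      ∫ y in (-π)..π, pd (0,0,1) k (s,x,y) * l (s,x,y)
        = - ∫ y in (-π)..π, k (s,x,y) * pd (0,0,1) l (s,x,y) := by
    intro k l hk hl hkper hlper s x
    apply ibp_per (fun y => hasDerivAt_sect_y hk s x y) (fun y => hasDerivAt_sect_y hl s x y)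
      ((pd_contDiff _ hk).continuous.comp (by fun_prop))
      ((pd_contDiff _ hl).continuous.comp (by fun_prop))
    rw [pery_val k hkper, pery_val l hlper]
  -- inner integration by parts, x-direction
  have ibp_x : ∀ (k l : ℝ × ℝ × ℝ → ℝ), ContDiff ℝ (⊤ : ℕ∞) k → ContDiff ℝ (⊤ : ℕ∞) l →
      (∀ p, k (p + cx) = k p) → (∀ p, l (p + cx) = l p) → ∀ s y,
      ∫ x in (-π)..π, pd (0,1,0) k (s,x,y) * l (s,x,y)
        = - ∫ x in (-π)..π, k (s,x,y) * pd (0,1,0) l (s,x,y) := by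
    intro k l hk hl hkper hlper s y
    apply ibp_per (fun x => hasDerivAt_sect_x hk s x y) (fun x => hasDerivAt_sect_x hl s x y)
      ((pd_contDiff _ hk).continuous.comp (by fun_prop))
      ((pd_contDiff _ hl).continuous.comp (by fun_prop))
    rw [perx_val k hkper, perx_val l hlper]
  -- double-integral ibp in x (via Fubini)
  have I2_ibp_x : ∀ (k l : ℝ × ℝ × ℝ → ℝ), ContDiff ℝ (⊤ : ℕ∞) k → ContDiff ℝ (⊤ : ℕ∞) l →
      (∀ p, k (p + cx) = k p) → (∀ p, l (p + cx) = l p) → ∀ s,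
      I2 (fun x y => pd (0,1,0) k (s,x,y) * l (s,x,y))
        = - I2 (fun x y => k (s,x,y) * pd (0,1,0) l (s,x,y)) := by
    intro k l hk hl hkper hlper s
    have ck : Continuous k := hk.continuous
    have cl : Continuous l := hl.continuous
    have ck' : Continuous (pd (0,1,0) k) := (pd_contDiff _ hk).continuous
    have cl' : Continuous (pd (0,1,0) l) := (pd_contDiff _ hl).continuous
    rw [I2_swap (h := fun x y => pd (0,1,0) k (s,x,y) * l (s,x,y)) (by fun_prop),
      I2_swap (h := fun x y => k (s,x,y) * pd (0,1,0) l (s,x,y)) (by fun_prop)]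
    rw [← intervalIntegral.integral_neg]
    apply intervalIntegral.integral_congr
    intro y _
    simp only
    exact ibp_x k l hk hl hkper hlper s y
  -- double-integral ibp in y
  have I2_ibp_y : ∀ (k l : ℝ × ℝ × ℝ → ℝ), ContDiff ℝ (⊤ : ℕ∞) k → ContDiff ℝ (⊤ : ℕ∞) l →
      (∀ p, k (p + cy) = k p) → (∀ p, l (p + cy) = l p) → ∀ s,
      I2 (fun x y => pd (0,0,1) k (s,x,y) * l (s,x,y))
        = - I2 (fun x y => k (s,x,y) * pd (0,0,1) l (s,x,y)) := by
    intro k l hk hl hkper hlper s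
    show (∫ x in (-π)..π, ∫ y in (-π)..π, pd (0,0,1) k (s,x,y) * l (s,x,y)) = _
    rw [show - I2 (fun x y => k (s,x,y) * pd (0,0,1) l (s,x,y))
        = ∫ x in (-π)..π, - ∫ y in (-π)..π, k (s,x,y) * pd (0,0,1) l (s,x,y) by
      rw [intervalIntegral.integral_neg]; rfl]
    apply intervalIntegral.integral_congr
    intro x _
    simp only
    exact ibp_y k l hk hl hkper hlper s x
  have hibp1 : ∀ s, I2 (fun x y => (Pxx (s,x,y) + Pyy (s,x,y)) * F (s,x,y)) = - Gq s := by
    intro s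
    have hxp : I2 (fun x y => Pxx (s,x,y) * F (s,x,y))
        = - I2 (fun x y => Px (s,x,y) * Px (s,x,y)) :=
      I2_ibp_x Px F hFPx hF hPxperx hFperx s
    have hyp : I2 (fun x y => Pyy (s,x,y) * F (s,x,y))
        = - I2 (fun x y => Py (s,x,y) * Py (s,x,y)) :=
      I2_ibp_y Py F hFPy hF hPypery hFpery s
    have hsplit : I2 (fun x y => (Pxx (s,x,y) + Pyy (s,x,y)) * F (s,x,y))
        = I2 (fun x y => Pxx (s,x,y) * F (s,x,y)) + I2 (fun x y => Pyy (s,x,y) * F (s,x,y)) := by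
      rw [show (fun x y => (Pxx (s,x,y) + Pyy (s,x,y)) * F (s,x,y))
          = fun x y => Pxx (s,x,y) * F (s,x,y) + Pyy (s,x,y) * F (s,x,y) from by
        funext x y; ring]
      exact I2_add (by fun_prop) (by fun_prop)
    have hGsplit : Gq s = I2 (fun x y => Px (s,x,y) * Px (s,x,y))
        + I2 (fun x y => Py (s,x,y) * Py (s,x,y)) := by
      simp only [hGqdef]
      rw [show (fun x y => Px (s,x,y)^2 + Py (s,x,y)^2)
          = fun x y => Px (s,x,y) * Px (s,x,y) + Py (s,x,y) * Py (s,x,y) from by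
        funext x y; ring]
      exact I2_add (by fun_prop) (by fun_prop)
    rw [hsplit, hxp, hyp, hGsplit]
    ring
  have hibp2 : ∀ s, I2 (fun x y => Px (s,x,y) * Qx (s,x,y) + Py (s,x,y) * Qy (s,x,y))
      = - I2 (fun x y => (Pxx (s,x,y) + Pyy (s,x,y)) * Pt (s,x,y)) := by
    intro s
    have hQxc : ∀ p, pd (0,1,0) Pt p = Qx p := fun p => pd_comm hF (0,1,0) (1,0,0) p
    have hQyc : ∀ p, pd (0,0,1) Pt p = Qy p := fun p => pd_comm hF (0,0,1) (1,0,0) p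
    have hxp : I2 (fun x y => Px (s,x,y) * Qx (s,x,y))
        = - I2 (fun x y => Pxx (s,x,y) * Pt (s,x,y)) := by
      have h1 := I2_ibp_x Px Pt hFPx hFPt hPxperx hPtperx s
      have h2 : I2 (fun x y => Pxx (s,x,y) * Pt (s,x,y))
          = - I2 (fun x y => Px (s,x,y) * Qx (s,x,y)) := by
        rw [show (fun x y => Px (s,x,y) * Qx (s,x,y))
            = fun x y => Px (s,x,y) * pd (0,1,0) Pt (s,x,y) from by
          funext x y; rw [hQxc]]
        exact h1
      linarith
    have hyp : I2 (fun x y => Py (s,x,y) * Qy (s,x,y))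
        = - I2 (fun x y => Pyy (s,x,y) * Pt (s,x,y)) := by
      have h1 := I2_ibp_y Py Pt hFPy hFPt hPypery hPtpery s
      have h2 : I2 (fun x y => Pyy (s,x,y) * Pt (s,x,y))
          = - I2 (fun x y => Py (s,x,y) * Qy (s,x,y)) := by
        rw [show (fun x y => Py (s,x,y) * Qy (s,x,y))
            = fun x y => Py (s,x,y) * pd (0,0,1) Pt (s,x,y) from by
          funext x y; rw [hQyc]]
        exact h1
      linarith
    have hsplitL : I2 (fun x y => Px (s,x,y) * Qx (s,x,y) + Py (s,x,y) * Qy (s,x,y))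
        = I2 (fun x y => Px (s,x,y) * Qx (s,x,y)) + I2 (fun x y => Py (s,x,y) * Qy (s,x,y)) :=
      I2_add (by fun_prop) (by fun_prop)
    have hsplitR : I2 (fun x y => (Pxx (s,x,y) + Pyy (s,x,y)) * Pt (s,x,y))
        = I2 (fun x y => Pxx (s,x,y) * Pt (s,x,y))
          + I2 (fun x y => Pyy (s,x,y) * Pt (s,x,y)) := by
      rw [show (fun x y => (Pxx (s,x,y) + Pyy (s,x,y)) * Pt (s,x,y))
          = fun x y => Pxx (s,x,y) * Pt (s,x,y) + Pyy (s,x,y) * Pt (s,x,y) from by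
        funext x y; ring]
      exact I2_add (by fun_prop) (by fun_prop)
    rw [hsplitL, hxp, hyp, hsplitR]
    ring
  -- Cauchy-Schwarz against the transport term
  have hcs : ∀ s, 0 ≤ s → ∀ (k : ℝ × ℝ × ℝ → ℝ), Continuous k →
      |I2 (fun x y => k (s,x,y) * gs (s,x,y))|
        ≤ 2 * M * Real.sqrt (I2 (fun x y => k (s,x,y)^2)) * Real.sqrt (Gq s) := by
    intro s hs k ck
    set SK := Real.sqrt (I2 (fun x y => k (s,x,y)^2)) with hSKdef
    have hSK0 : 0 ≤ SK := Real.sqrt_nonneg _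
    have step1 : |I2 (fun x y => k (s,x,y) * gs (s,x,y))|
        ≤ I2 (fun x y => |k (s,x,y) * gs (s,x,y)|) := I2_abs_le (by fun_prop)
    have step2 : I2 (fun x y => |k (s,x,y) * gs (s,x,y)|)
        ≤ I2 (fun x y => M * (|k (s,x,y)| * |Px (s,x,y)|) + M * (|k (s,x,y)| * |Py (s,x,y)|)) := by
      apply I2_mono (by fun_prop) (by fun_prop)
      intro x y
      rw [abs_mul]
      have h := hgsbound s hs x y
      nlinarith [abs_nonneg (k (s,x,y)), abs_nonneg (gs (s,x,y))]
    have step3 : I2 (fun x y => M * (|k (s,x,y)| * |Px (s,x,y)|)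
          + M * (|k (s,x,y)| * |Py (s,x,y)|))
        = M * I2 (fun x y => |k (s,x,y)| * |Px (s,x,y)|)
          + M * I2 (fun x y => |k (s,x,y)| * |Py (s,x,y)|) := by
      rw [I2_add (by fun_prop) (by fun_prop), I2_const_mul, I2_const_mul]
    have habs : I2 (fun x y => |k (s,x,y)|^2) = I2 (fun x y => k (s,x,y)^2) := by
      rw [show (fun x y => |k (s,x,y)|^2) = fun x y => k (s,x,y)^2 from by
        funext x y; rw [sq_abs]]
    have habsx : I2 (fun x y => |Px (s,x,y)|^2) = I2 (fun x y => Px (s,x,y)^2) := by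
      rw [show (fun x y => |Px (s,x,y)|^2) = fun x y => Px (s,x,y)^2 from by
        funext x y; rw [sq_abs]]
    have habsy : I2 (fun x y => |Py (s,x,y)|^2) = I2 (fun x y => Py (s,x,y)^2) := by
      rw [show (fun x y => |Py (s,x,y)|^2) = fun x y => Py (s,x,y)^2 from by
        funext x y; rw [sq_abs]]
    have hGx : Real.sqrt (I2 (fun x y => Px (s,x,y)^2)) ≤ Real.sqrt (Gq s) := by
      apply Real.sqrt_le_sqrt
      simp only [hGqdef]
      exact I2_mono (by fun_prop) (by fun_prop) (fun x y => by nlinarith [sq_nonneg (Py (s,x,y))])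
    have hGy : Real.sqrt (I2 (fun x y => Py (s,x,y)^2)) ≤ Real.sqrt (Gq s) := by
      apply Real.sqrt_le_sqrt
      simp only [hGqdef]
      exact I2_mono (by fun_prop) (by fun_prop) (fun x y => by nlinarith [sq_nonneg (Px (s,x,y))])
    have step4 : I2 (fun x y => |k (s,x,y)| * |Px (s,x,y)|) ≤ SK * Real.sqrt (Gq s) := by
      calc I2 (fun x y => |k (s,x,y)| * |Px (s,x,y)|)
          ≤ Real.sqrt (I2 (fun x y => |k (s,x,y)|^2))
            * Real.sqrt (I2 (fun x y => |Px (s,x,y)|^2)) :=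
            I2_cs_sqrt (by fun_prop) (by fun_prop)
        _ = SK * Real.sqrt (I2 (fun x y => Px (s,x,y)^2)) := by rw [habs, habsx]
        _ ≤ SK * Real.sqrt (Gq s) := mul_le_mul_of_nonneg_left hGx hSK0
    have step5 : I2 (fun x y => |k (s,x,y)| * |Py (s,x,y)|) ≤ SK * Real.sqrt (Gq s) := by
      calc I2 (fun x y => |k (s,x,y)| * |Py (s,x,y)|)
          ≤ Real.sqrt (I2 (fun x y => |k (s,x,y)|^2))
            * Real.sqrt (I2 (fun x y => |Py (s,x,y)|^2)) :=
            I2_cs_sqrt (by fun_prop) (by fun_prop)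
        _ = SK * Real.sqrt (I2 (fun x y => Py (s,x,y)^2)) := by rw [habs, habsy]
        _ ≤ SK * Real.sqrt (Gq s) := mul_le_mul_of_nonneg_left hGy hSK0
    calc |I2 (fun x y => k (s,x,y) * gs (s,x,y))|
        ≤ I2 (fun x y => |k (s,x,y) * gs (s,x,y)|) := step1
      _ ≤ I2 (fun x y => M * (|k (s,x,y)| * |Px (s,x,y)|)
            + M * (|k (s,x,y)| * |Py (s,x,y)|)) := step2
      _ = M * I2 (fun x y => |k (s,x,y)| * |Px (s,x,y)|)
            + M * I2 (fun x y => |k (s,x,y)| * |Py (s,x,y)|) := step3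
      _ ≤ M * (SK * Real.sqrt (Gq s)) + M * (SK * Real.sqrt (Gq s)) :=
          add_le_add (mul_le_mul_of_nonneg_left step4 hM0)
            (mul_le_mul_of_nonneg_left step5 hM0)
      _ = 2 * M * SK * Real.sqrt (Gq s) := by ring
  -- initial positivity
  have hE0pos : 0 < E 0 := by
    obtain ⟨a, b, hab⟩ := hnz
    have twopi : (0:ℝ) < 2 * π := by linarith [Real.pi_pos]
    -- move the witness into [-π, π) × [-π, π)
    have per1 : Function.Periodic (fun x => ρ 0 x b) (2*π) := fun x => hperx 0 x b
    set a' : ℝ := toIcoMod twopi (-π) a with ha'def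
    have ha'mem : a' ∈ Ico (-π) (-π + 2*π) := toIcoMod_mem_Ico twopi (-π) a
    have h1 : ρ 0 a' b = ρ 0 a b := by
      have h := per1.sub_zsmul_eq (toIcoDiv twopi (-π) a) (x := a)
      rw [self_sub_toIcoDiv_zsmul] at h
      exact h
    have per2 : Function.Periodic (fun y => ρ 0 a' y) (2*π) := fun y => hpery 0 a' y
    set b' : ℝ := toIcoMod twopi (-π) b with hb'def
    have hb'mem : b' ∈ Ico (-π) (-π + 2*π) := toIcoMod_mem_Ico twopi (-π) b
    have h2 : ρ 0 a' b' = ρ 0 a' b := by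
      have h := per2.sub_zsmul_eq (toIcoDiv twopi (-π) b) (x := b)
      rw [self_sub_toIcoDiv_zsmul] at h
      exact h
    have hne : ρ 0 a' b' ≠ 0 := by rw [h2, h1]; exact hab
    have ha'lt : a' < π := by linarith [ha'mem.2]
    have hb'lt : b' < π := by linarith [hb'mem.2]
    have ha'ge : -π ≤ a' := ha'mem.1
    have hb'ge : -π ≤ b' := hb'mem.1
    -- nudge into the open box
    have cφ : Continuous (fun q : ℝ × ℝ => ρ 0 q.1 q.2) := by
      have : (fun q : ℝ × ℝ => ρ 0 q.1 q.2) = F ∘ (fun q : ℝ × ℝ => (0, q.1, q.2)) := rfl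
      rw [this]
      exact cF.comp (by fun_prop)
    have hSopen : IsOpen {q : ℝ × ℝ | ρ 0 q.1 q.2 ≠ 0} :=
      isOpen_compl_singleton.preimage cφ
    obtain ⟨ε, hε, hball⟩ := Metric.isOpen_iff.mp hSopen (a', b') hne
    set δ : ℝ := min (ε/2) (min ((π - a')/2) ((π - b')/2)) with hδdef
    have hδpos : 0 < δ := by
      apply lt_min (by linarith)
      exact lt_min (by linarith) (by linarith)
    have hδε : δ < ε := by
      have := min_le_left (ε/2) (min ((π - a')/2) ((π - b')/2))
      linarith
    have hδa : δ ≤ (π - a')/2 := le_trans (min_le_right _ _) (min_le_left _ _)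
    have hδb : δ ≤ (π - b')/2 := le_trans (min_le_right _ _) (min_le_right _ _)
    have hmem : ((a' + δ, b' + δ) : ℝ × ℝ) ∈ Metric.ball (a', b') ε := by
      rw [Metric.mem_ball, Prod.dist_eq]
      simp only [Real.dist_eq]
      rw [show a' + δ - a' = δ by ring, show b' + δ - b' = δ by ring,
        abs_of_pos hδpos]
      simp [hδε]
    have hne2 : ρ 0 (a' + δ) (b' + δ) ≠ 0 := hball hmem
    have hxmem : a' + δ ∈ Ioo (-π) π := ⟨by linarith, by linarith⟩
    have hymem : b' + δ ∈ Ioo (-π) π := ⟨by linarith, by linarith⟩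
    -- now positivity of the double integral
    show (0:ℝ) < ∫ x in (-π)..π, ∫ y in (-π)..π, F (0,x,y)^2
    apply integral_pos_of_pos_at (x₀ := a' + δ)
    · exact cont_inner (by fun_prop)
    · intro x
      exact intervalIntegral.integral_nonneg pi_le (fun y _ => sq_nonneg _)
    · exact hxmem
    · apply integral_pos_of_pos_at (x₀ := b' + δ)
      · exact cF.comp (by fun_prop : Continuous fun y : ℝ => ((0:ℝ), a' + δ, y)) |>.pow 2
      · intro y; exact sq_nonneg _
      · exact hymem
      · exact pow_pos (abs_pos.mpr hne2) 2 |>.trans_eq (by rw [sq_abs])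
  -- the frequency-function differential inequality
  set K : ℝ := 2 * M^2 / μ with hKdef
  have hK0 : 0 ≤ K := by positivity
  have core : ∀ s, 0 ≤ s → 0 < E s →
      G' s * E s - Gq s * E' s ≤ K * (Gq s / E s) * (E s)^2 := by
    intro s hs hEs
    set L : ℝ := Gq s / E s with hLdef
    set w : ℝ × ℝ × ℝ → ℝ := fun p => Pxx p + Pyy p + L * F p with hwdef
    have cw : Continuous w := (cPxx.add cPyy).add (continuous_const.mul cF)
    set W : ℝ := I2 (fun x y => w (s,x,y)^2) with hWdef
    have hW0 : 0 ≤ W := I2_sq_nonneg _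
    have hLE : L * E s = Gq s := by
      rw [hLdef]; exact div_mul_cancel₀ _ (ne_of_gt hEs)
    have hEFF : I2 (fun x y => F (s,x,y) * F (s,x,y)) = E s := by
      simp only [hEdef]
      rw [show (fun x y => F (s,x,y) * F (s,x,y)) = fun x y => F (s,x,y)^2 from by
        funext x y; ring]
    have horth : I2 (fun x y => w (s,x,y) * F (s,x,y)) = 0 := by
      have hexp : (fun x y => w (s,x,y) * F (s,x,y))
          = fun x y => (Pxx (s,x,y) + Pyy (s,x,y)) * F (s,x,y)
            + L * (F (s,x,y) * F (s,x,y)) := by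
        funext x y; simp only [hwdef]; ring
      rw [hexp, I2_add (by fun_prop) (by fun_prop), I2_const_mul, hEFF, hibp1 s]
      linarith [hLE]
    have hwPtexp : I2 (fun x y => w (s,x,y) * Pt (s,x,y))
        = I2 (fun x y => (Pxx (s,x,y) + Pyy (s,x,y)) * Pt (s,x,y))
          + L * I2 (fun x y => F (s,x,y) * Pt (s,x,y)) := by
      have hexp : (fun x y => w (s,x,y) * Pt (s,x,y))
          = fun x y => (Pxx (s,x,y) + Pyy (s,x,y)) * Pt (s,x,y)
            + L * (F (s,x,y) * Pt (s,x,y)) := by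
        funext x y; simp only [hwdef]; ring
      rw [hexp, I2_add (by fun_prop) (by fun_prop), I2_const_mul]
    have hnum : G' s * E s - Gq s * E' s
        = -2 * E s * I2 (fun x y => w (s,x,y) * Pt (s,x,y)) := by
      have hG's : G' s = -2 * I2 (fun x y => (Pxx (s,x,y) + Pyy (s,x,y)) * Pt (s,x,y)) := by
        simp only [hG'def]
        rw [hibp2 s]; ring
      have hE's : E' s = 2 * I2 (fun x y => F (s,x,y) * Pt (s,x,y)) := by
        simp only [hE'def]
      rw [hG's, hE's, hwPtexp]
      have : Gq s = L * E s := hLE.symm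
      rw [this]; ring
    have hwPt : I2 (fun x y => w (s,x,y) * Pt (s,x,y))
        = μ * W - I2 (fun x y => w (s,x,y) * gs (s,x,y)) := by
      have hexp : (fun x y => w (s,x,y) * Pt (s,x,y))
          = fun x y => μ * (w (s,x,y) * w (s,x,y))
            + ((-(μ * L)) * (w (s,x,y) * F (s,x,y))
              + (-1) * (w (s,x,y) * gs (s,x,y))) := by
        funext x y
        have hPt := hPtdecomp (s,x,y)
        simp only [hwdef] at *
        rw [hPt]; ring
      rw [hexp, I2_add (by fun_prop) (by fun_prop), I2_add (by fun_prop) (by fun_prop),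
        I2_const_mul, I2_const_mul, I2_const_mul, horth]
      have hWW : I2 (fun x y => w (s,x,y) * w (s,x,y)) = W := by
        simp only [hWdef]
        rw [show (fun x y => w (s,x,y) * w (s,x,y)) = fun x y => w (s,x,y)^2 from by
          funext x y; ring]
      rw [hWW]; ring
    have hbd := hcs s hs w cw
    have hWsq : Real.sqrt W * Real.sqrt W = W := Real.mul_self_sqrt hW0
    have hGsq : Real.sqrt (Gq s) * Real.sqrt (Gq s) = Gq s := Real.mul_self_sqrt (hGq0le s)
    have hineq : -(M^2/μ) * Gq s ≤ I2 (fun x y => w (s,x,y) * Pt (s,x,y)) := by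
      have h1 : I2 (fun x y => w (s,x,y) * gs (s,x,y))
          ≤ 2 * M * Real.sqrt W * Real.sqrt (Gq s) := by
        calc I2 (fun x y => w (s,x,y) * gs (s,x,y))
            ≤ |I2 (fun x y => w (s,x,y) * gs (s,x,y))| := le_abs_self _
          _ ≤ 2 * M * Real.sqrt (I2 (fun x y => w (s,x,y)^2)) * Real.sqrt (Gq s) := hbd
          _ = 2 * M * Real.sqrt W * Real.sqrt (Gq s) := by rw [← hWdef]
      rw [hwPt]
      have key2 := amgm hμ hWsq hGsq (M := M)
      linarith
    have hfin : L * (E s)^2 = Gq s * E s := by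
      rw [hLdef]; exact div_mul_sq _ _ (ne_of_gt hEs)
    rw [hnum, hKdef]
    exact core_final hμ hineq hEs.le hfin
  have coreE : ∀ s, 0 ≤ s →
      -(2*μ*Gq s + 4*M*Real.sqrt (E s)*Real.sqrt (Gq s)) ≤ E' s := by
    intro s hs
    have hE'eq : E' s = -2 * μ * Gq s - 2 * I2 (fun x y => F (s,x,y) * gs (s,x,y)) := by
      simp only [hE'def]
      have hexp : (fun x y => F (s,x,y) * Pt (s,x,y))
          = fun x y => μ * ((Pxx (s,x,y) + Pyy (s,x,y)) * F (s,x,y))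
            + (-1) * (F (s,x,y) * gs (s,x,y)) := by
        funext x y
        have hPt := hPtdecomp (s,x,y)
        rw [hPt]; ring
      rw [hexp, I2_add (by fun_prop) (by fun_prop), I2_const_mul, I2_const_mul, hibp1 s]
      ring
    have hbd := hcs s hs F cF
    have hEF : I2 (fun x y => F (s,x,y)^2) = E s := by simp only [hEdef]
    have h1 : I2 (fun x y => F (s,x,y) * gs (s,x,y))
        ≤ 2 * M * Real.sqrt (E s) * Real.sqrt (Gq s) := by
      calc I2 (fun x y => F (s,x,y) * gs (s,x,y))
          ≤ |I2 (fun x y => F (s,x,y) * gs (s,x,y))| := le_abs_self _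
        _ ≤ 2 * M * Real.sqrt (I2 (fun x y => F (s,x,y)^2)) * Real.sqrt (Gq s) := hbd
        _ = 2 * M * Real.sqrt (E s) * Real.sqrt (Gq s) := by rw [hEF]
    rw [hE'eq]
    linarith
  -- Gronwall for the frequency function on intervals of positivity
  have claimA : ∀ T, 0 ≤ T → (∀ s ∈ Icc (0:ℝ) T, 0 < E s) →
      ∀ s ∈ Icc (0:ℝ) T, Gq s / E s ≤ (Gq 0 / E 0) * Real.exp (K * s) := by
    intro T hT hEp
    have hd : ∀ s ∈ Icc (0:ℝ) T, HasDerivAt (fun r => Gq r / E r)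
        ((G' s * E s - Gq s * E' s) / (E s)^2) s := by
      intro s hs
      exact (hGd s).div (hEd s) (ne_of_gt (hEp s hs))
    have hle : ∀ s ∈ Icc (0:ℝ) T,
        (G' s * E s - Gq s * E' s) / (E s)^2 ≤ K * (Gq s / E s) := by
      intro s hs
      have hEs := hEp s hs
      have h := core s hs.1 hEs
      rw [div_le_iff₀ (by positivity)]
      linarith [h]
    have key := gron_le hT hd hle
    intro s hs
    have := key s hs
    simpa using this
  -- positivity propagates
  have hEcont : Continuous E := by
    rw [continuous_iff_continuousAt]; exact fun r => (hEd r).continuousAt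
  have hEpos : ∀ s, 0 ≤ s → 0 < E s := by
    intro s hs
    by_contra hc
    push_neg at hc
    set Sset : Set ℝ := {r | 0 ≤ r ∧ E r ≤ 0} with hSsetdef
    have hSne : Sset.Nonempty := ⟨s, hs, hc⟩
    have hSbdd : BddBelow Sset := ⟨0, fun r hr => hr.1⟩
    have hSclosed : IsClosed Sset := by
      have : Sset = Ici 0 ∩ {r | E r ≤ 0} := by
        ext r; simp [hSsetdef, mem_Ici]
      rw [this]
      exact isClosed_Ici.inter (isClosed_le hEcont continuous_const)
    set T : ℝ := sInf Sset with hTdef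
    have hTmem : T ∈ Sset := hSclosed.csInf_mem hSne hSbdd
    have hT0 : 0 ≤ T := hTmem.1
    have hET : E T ≤ 0 := hTmem.2
    have hTne : T ≠ 0 := by
      intro h
      rw [h] at hET
      linarith
    have hTpos : 0 < T := lt_of_le_of_ne hT0 (Ne.symm hTne)
    have hbefore : ∀ r, 0 ≤ r → r < T → 0 < E r := by
      intro r hr0 hrT
      by_contra hc2
      push_neg at hc2
      have : T ≤ r := csInf_le hSbdd ⟨hr0, hc2⟩
      linarith
    set B : ℝ := (Gq 0 / E 0) * Real.exp (K * T) with hBdef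
    have hΛ0 : 0 ≤ Gq 0 / E 0 := div_nonneg (hGq0le 0) (hE0le 0)
    have hB0 : 0 ≤ B := mul_nonneg hΛ0 (Real.exp_pos _).le
    have hΛle : ∀ r, 0 ≤ r → r < T → Gq r / E r ≤ B := by
      intro r hr0 hrT
      have h1 := claimA r hr0 (fun s' hs' => hbefore s' hs'.1 (lt_of_le_of_lt hs'.2 hrT))
        r ⟨hr0, le_rfl⟩
      calc Gq r / E r ≤ (Gq 0 / E 0) * Real.exp (K * r) := h1
        _ ≤ B := by
            rw [hBdef]
            apply mul_le_mul_of_nonneg_left _ hΛ0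
            apply Real.exp_le_exp.mpr
            have : (0:ℝ) ≤ K := hK0
            nlinarith
    set c : ℝ := 2*μ*B + 4*M*Real.sqrt B with hcdef
    have hge : ∀ r ∈ Ioo (0:ℝ) T, -c * E r ≤ E' r := by
      intro r hr
      have hEr : 0 < E r := hbefore r hr.1.le hr.2
      have h1 : Gq r ≤ B * E r := by
        have := hΛle r hr.1.le hr.2
        rw [div_le_iff₀ hEr] at this
        linarith
      have h2 : Real.sqrt (Gq r) ≤ Real.sqrt B * Real.sqrt (E r) := by
        rw [← Real.sqrt_mul hB0]
        exact Real.sqrt_le_sqrt h1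
      have h3 : Real.sqrt (E r) * Real.sqrt (Gq r) ≤ Real.sqrt B * E r := by
        calc Real.sqrt (E r) * Real.sqrt (Gq r)
            ≤ Real.sqrt (E r) * (Real.sqrt B * Real.sqrt (E r)) :=
              mul_le_mul_of_nonneg_left h2 (Real.sqrt_nonneg _)
          _ = Real.sqrt B * (Real.sqrt (E r) * Real.sqrt (E r)) := by ring
          _ = Real.sqrt B * E r := by rw [Real.mul_self_sqrt (hE0le r)]
      have h4 := coreE r hr.1.le
      have h5 : 2*μ*Gq r + 4*M*Real.sqrt (E r)*Real.sqrt (Gq r) ≤ c * E r := by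
        rw [hcdef]
        have e1 : 2*μ*Gq r ≤ 2*μ*(B * E r) := by nlinarith
        have e2 : 4*M*(Real.sqrt (E r)*Real.sqrt (Gq r)) ≤ 4*M*(Real.sqrt B * E r) := by
          apply mul_le_mul_of_nonneg_left h3 (by linarith)
        nlinarith [e1, e2]
      linarith
    have hgron := gron_ge hT0 (fun t _ => hEd t) hge
    have : 0 < E 0 * Real.exp (-c * (T - 0)) := mul_pos hE0pos (Real.exp_pos _)
    linarith
  constructor
  · -- nonvanishing
    intro t ht
    by_contra hcon
    push_neg at hcon
    have : E t = 0 := by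
      have h1 : (fun x y => F (t,x,y)^2) = fun _ _ => (0:ℝ) := by
        funext x y
        simp [hFdef, hcon x y]
      simp only [hEdef]
      rw [h1, I2_zero]
    linarith [hEpos t ht]
  · -- exponential bound
    set Λ0 : ℝ := Gq 0 / E 0 with hΛ0def
    have hΛ00 : 0 ≤ Λ0 := div_nonneg (hGq0le 0) (hE0le 0)
    refine ⟨max (Real.sqrt Λ0 + 1) (K/2 + 1), ?_, ?_⟩
    · calc (0:ℝ) < Real.sqrt Λ0 + 1 := by positivity
        _ ≤ _ := le_max_left _ _
    · intro t ht
      set C : ℝ := max (Real.sqrt Λ0 + 1) (K/2 + 1) with hCdef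
      have hC0 : 0 ≤ C := le_trans (by positivity) (le_max_left _ _)
      have hEt := hEpos t ht
      have hΛ : Gq t / E t ≤ Λ0 * Real.exp (K * t) :=
        claimA t ht (fun s' hs' => hEpos s' hs'.1) t ⟨ht, le_rfl⟩
      have hgoal1 : gradL2Norm (ρ t) / l2Norm (ρ t)
          = Real.sqrt (Gq t) / Real.sqrt (E t) := by
        unfold gradL2Norm l2Norm
        rw [hGeq t, hEeq t]
      rw [hgoal1]
      have hgoal2 : Real.sqrt (Gq t) / Real.sqrt (E t) = Real.sqrt (Gq t / E t) :=
        (Real.sqrt_div (hGq0le t) _).symm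
      rw [hgoal2]
      have step1 : Real.sqrt (Gq t / E t) ≤ Real.sqrt (Λ0 * Real.exp (K * t)) :=
        Real.sqrt_le_sqrt hΛ
      have step2 : Real.sqrt (Λ0 * Real.exp (K * t))
          = Real.sqrt Λ0 * Real.exp (K * t / 2) := by
        rw [Real.sqrt_mul hΛ00]
        have hxx : Real.sqrt (Real.exp (K * t)) = Real.exp (K * t / 2) := by
          rw [show Real.exp (K * t) = Real.exp (K * t / 2) * Real.exp (K * t / 2) from by
              rw [← Real.exp_add]; congr 1; ring,
            Real.sqrt_mul_self (Real.exp_pos _).le]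
        rw [hxx]
      have step3 : Real.sqrt Λ0 * Real.exp (K * t / 2) ≤ C * Real.exp (C * t) := by
        apply mul_le_mul
        · calc Real.sqrt Λ0 ≤ Real.sqrt Λ0 + 1 := by linarith
            _ ≤ C := le_max_left _ _
        · apply Real.exp_le_exp.mpr
          have h1 : K/2 ≤ C := le_trans (by linarith) (le_max_right _ _)
          calc K * t / 2 = (K/2) * t := by ring
            _ ≤ C * t := mul_le_mul_of_nonneg_right h1 ht
        · positivity
        · exact hC0
      linarith [step1, step2 ▸ step1, step3]
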